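/- Let K > 2, τ > 0, and let k ≥ 1 be an integer with τ²k² > K−1. Set 2̃* := 2K/(K−2) and V(t) := [K(K−2)]^{(K−2)/4}(1+t²)^{−(K−2)/2}. If η ∈ C¹([0,∞)) satisfies η(0) = 0, ∫_0^∞ |η'(t)|² t^{K−1} dt < ∞, and (t^{K−1}η')' + (2̃* − 1)V^{2̃*−2} t^{K−1} η − τ²k² t^{K−3} η = 0 on (0,∞), then η ≡ 0. -/

import Mathlib

noncomputable section

open MeasureTheory Real Filter Topology Asymptotics RealInnerProductSpace

/-- The underlying space `ℝ²`. -/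
abbrev E2 := EuclideanSpace ℝ (Fin 2)

/-- Weighted Dirichlet inner product `⟨u,v⟩ = ∫ |x|^{-2a} ∇u·∇v dx`. -/
def wip (a : ℝ) (u v : E2 → ℝ) : ℝ :=
  ∫ x : E2, ‖x‖ ^ (-2 * a) * ⟪gradient u x, gradient v x⟫

/-- Weighted Dirichlet energy `‖u‖² = ∫ |x|^{-2a} |∇u|² dx`. -/
def enSq (a : ℝ) (u : E2 → ℝ) : ℝ :=
  ∫ x : E2, ‖x‖ ^ (-2 * a) * ‖gradient u x‖ ^ 2

/-- The Felli–Schneider curve `b_FS(a) = a - a/√(a²+1)`. -/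
def bFS (a : ℝ) : ℝ := a - a / Real.sqrt (a ^ 2 + 1)

/-- The exponent `q = 2/(b-a)`. -/
def qexp (a b : ℝ) : ℝ := 2 / (b - a)

/-- `τ = (a-b)/(a(1+a-b))`. -/
def tauc (a b : ℝ) : ℝ := (a - b) / (a * (1 + a - b))

/-- `K = 2/(1+a-b)`. -/
def Kc (a b : ℝ) : ℝ := 2 / (1 + a - b)

/-- The normalization constant `C_{a,b} = [τ^{-2} K(K-2)]^{(K-2)/4}`. -/
def Cab (a b : ℝ) : ℝ :=
  (tauc a b ^ (-2 : ℝ) * (Kc a b * (Kc a b - 2))) ^ ((Kc a b - 2) / 4)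

/-- The standard extremal `U(x) = C_{a,b} (1+|x|^{-a(q-2)})^{-2/(q-2)}`. -/
def Ufun (a b : ℝ) (x : E2) : ℝ :=
  Cab a b * (1 + ‖x‖ ^ (-(a * (qexp a b - 2)))) ^ (-(2 / (qexp a b - 2)))

/-- The rescaled extremal `U_λ(x) = λ^{-a} U(λx)`. -/
def Ulam (a b l : ℝ) (x : E2) : ℝ := l ^ (-a) * Ufun a b (l • x)

/-- The manifold of extremal functions `M = {c U_λ : c ∈ ℝ, λ > 0}`. -/
def memM (a b : ℝ) (u : E2 → ℝ) : Prop :=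
  ∃ c l : ℝ, 0 < l ∧ u = fun x => c * Ulam a b l x

/-- Membership in the weighted space `D_a^{1,2}(ℝ²)`: finite weighted Dirichlet
energy, and approximability by smooth compactly supported functions in the
weighted Dirichlet norm. -/
def MemD (a : ℝ) (u : E2 → ℝ) : Prop :=
  Integrable (fun x : E2 => ‖x‖ ^ (-2 * a) * ‖gradient u x‖ ^ 2) ∧
  ∃ φ : ℕ → E2 → ℝ, (∀ n, ContDiff ℝ (⊤ : ℕ∞) (φ n) ∧ HasCompactSupport (φ n)) ∧
    Tendsto (fun n => enSq a (fun x => u x - φ n x)) atTop (𝓝 0)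

/-- The weighted Lebesgue norm `‖u‖_* = (∫ |x|^{-qb} |u|^q dx)^{1/q}`. -/
def starNorm (a b : ℝ) (u : E2 → ℝ) : ℝ :=
  (∫ x : E2, ‖x‖ ^ (-(qexp a b * b)) * |u x| ^ qexp a b) ^ (1 / qexp a b)

/-- The best constant `S_{a,b}` in the CKN inequality. -/
def Sab (a b : ℝ) : ℝ :=
  sInf { r : ℝ | ∃ u : E2 → ℝ, MemD a u ∧ starNorm a b u ≠ 0 ∧
    r = enSq a u / starNorm a b u ^ 2 }

/-- The distance from `u` to the manifold of extremals,
`dist(u, M) = inf_{c,λ} ‖u - c U_λ‖`. -/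
def distM (a b : ℝ) (u : E2 → ℝ) : ℝ :=
  sInf { r : ℝ | ∃ c l : ℝ, 0 < l ∧
    r = Real.sqrt (enSq a (fun x => u x - c * Ulam a b l x)) }

/-- The stability quotient `E(u) = (‖u‖² - S_{a,b} ‖u‖_*²)/dist(u,M)²`. -/
def Efun (a b : ℝ) (u : E2 → ℝ) : ℝ :=
  (enSq a u - Sab a b * starNorm a b u ^ 2) / distM a b u ^ 2

/-- The best stability constant `𝓑 = inf { E(u) : u ∈ D \ M }`. -/
def Bcal (a b : ℝ) : ℝ :=
  sInf { r : ℝ | ∃ u : E2 → ℝ, MemD a u ∧ ¬ memM a b u ∧ r = Efun a b u }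

/-- `Z_0 = -aU + x·∇U`. -/
def Z0fun (a b : ℝ) (x : E2) : ℝ :=
  -a * Ufun a b x + ⟪x, gradient (Ufun a b) x⟫

/-- Explicit form of `Z_0`:
`(1-|x|^{-a(q-2)})/(1+|x|^{-a(q-2)})^{q/(q-2)}`. -/
def Z0exp (a b : ℝ) (x : E2) : ℝ :=
  (1 - ‖x‖ ^ (-(a * (qexp a b - 2)))) /
    (1 + ‖x‖ ^ (-(a * (qexp a b - 2)))) ^ (qexp a b / (qexp a b - 2))

/-- `Z_i(x) = |x|^{-a(q-2)/2-1} x_i / (1+|x|^{-a(q-2)})^{q/(q-2)}`, `i = 1,2`. -/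
def Zifun (a b : ℝ) (i : Fin 2) (x : E2) : ℝ :=
  ‖x‖ ^ (-(a * (qexp a b - 2)) / 2 - 1) * x i /
    (1 + ‖x‖ ^ (-(a * (qexp a b - 2)))) ^ (qexp a b / (qexp a b - 2))

/-- The weighted `L²` quantity `∫ |x|^{-qb} U^{q-2} v² dx`. -/
def wInt (a b : ℝ) (v : E2 → ℝ) : ℝ :=
  ∫ x : E2, ‖x‖ ^ (-(qexp a b * b)) * Ufun a b x ^ (qexp a b - 2) * v x ^ 2

/-- The third eigenvalue `μ₃` of the linearized problem, characterized
variationally over functions orthogonal to `U` and `Z₀`. -/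
def mu3 (a b : ℝ) : ℝ :=
  sInf { r : ℝ | ∃ v : E2 → ℝ, MemD a v ∧ v ≠ 0 ∧
    wip a v (Ufun a b) = 0 ∧ wip a v (Z0fun a b) = 0 ∧
    r = enSq a v / wInt a b v }

/-- `v` is a weak solution of the linearized equation
`-div(|x|^{-2a} ∇v) = (q-1)|x|^{-qb} U^{q-2} v` in `ℝ²`. -/
def IsLinSol (a b : ℝ) (v : E2 → ℝ) : Prop :=
  ∀ φ : E2 → ℝ, ContDiff ℝ (⊤ : ℕ∞) φ → HasCompactSupport φ →
    wip a v φ = (qexp a b - 1) *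
      ∫ x : E2, ‖x‖ ^ (-(qexp a b * b)) * Ufun a b x ^ (qexp a b - 2) * v x * φ x

/-- The `‖·‖_*`-normalized bubble `B(x) = c (1+|x|^{-a(q-2)})^{-2/(q-2)}`,
with normalization constant `c`. -/
def Bfun (a b c : ℝ) (x : E2) : ℝ :=
  c * (1 + ‖x‖ ^ (-(a * (qexp a b - 2)))) ^ (-(2 / (qexp a b - 2)))

/-- The rescaled bubble `B_λ(x) = λ^{-a} B(λx)`. -/
def Blam (a b c l : ℝ) (x : E2) : ℝ := l ^ (-a) * Bfun a b c (l • x)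

/-- The pairing `(u, |x|^{-qb} B_λ^{q-1})`. -/
def pairB (a b c l : ℝ) (u : E2 → ℝ) : ℝ :=
  ∫ x : E2, ‖x‖ ^ (-(qexp a b * b)) * Blam a b c l x ^ (qexp a b - 1) * u x

/-- `m(u) = sup_{λ>0} (u, |x|^{-qb} B_λ^{q-1})²`. -/
def mfun (a b c : ℝ) (u : E2 → ℝ) : ℝ :=
  sSup { r : ℝ | ∃ l : ℝ, 0 < l ∧ r = pairB a b c l u ^ 2 }


/-!
Let `Z(t) = t (1 + t²)^(-K/2)`, a positive multiple of `-V'`; it solves the same equation with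
`τ²k²` replaced by `K - 1`. For the Wronskian `g = t^(K-1) (η' Z - η Z')` one has
`g' = (τ²k² - (K - 1)) t^(K-3) η Z` and `(η / Z)' = g / (t^(K-1) Z²)`, so `g` increases strictly
on every interval where `η > 0`, and `η / Z` moves in the direction of the sign of `g`.

Suppose `η(t₀) > 0` and let `(α, β)` be the interval of positivity around `t₀`. Then `g(t₀) > 0`:
for `α = 0` because `g(0⁺) = 0`, and for `α > 0` because otherwise `η / Z` would decrease on
`[α, t₀]` from `η(α) / Z(α) = 0`. Hence `g > 0` and `η / Z` increases on `[t₀, β)`, so `η` cannot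
vanish at a finite `β`. Finally `β = ∞` is impossible: the finite energy keeps `η` bounded, and
since `t^(K-1) Z ≤ 1` and `-t^(K-1) Z' ≤ (K - 1) / t`, the bound `g ≥ g(t₀)` then forces
`η' ≥ g(t₀) / 2` near infinity. Applying this to `η` and `-η` gives `η = 0`.
-/

open Set

section Regularity

variable {f : ℝ → ℝ} {a : ℝ}

lemma ContDiffOn.differentiableAt_of_lt (hf : ContDiffOn ℝ 1 f (Ici a)) {t : ℝ} (ht : a < t) :
    DifferentiableAt ℝ f t :=
  (hf.contDiffAt (Ici_mem_nhds ht)).differentiableAt one_ne_zero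

lemma ContDiffOn.continuousOn_deriv_Ioi (hf : ContDiffOn ℝ 1 f (Ici a)) :
    ContinuousOn (deriv f) (Ioi a) :=
  ((hf.continuousOn_derivWithin (uniqueDiffOn_Ici a) le_rfl).mono Ioi_subset_Ici_self).congr
    fun _ ht => (derivWithin_of_mem_nhds (Ici_mem_nhds ht)).symm

lemma ContDiffOn.tendsto_deriv_nhdsGT (hf : ContDiffOn ℝ 1 f (Ici a)) :
    Tendsto (deriv f) (𝓝[>] a) (𝓝 (derivWithin f (Ici a) a)) :=
  (((hf.continuousOn_derivWithin (uniqueDiffOn_Ici a) le_rfl) a self_mem_Ici).mono_left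
    (nhdsWithin_mono _ Ioi_subset_Ici_self)).congr'
    (eventually_nhdsWithin_of_forall fun _ ht => derivWithin_of_mem_nhds (Ici_mem_nhds ht))

end Regularity

lemma le_half_sq_mul_add_inv (x : ℝ) {p : ℝ} (hp : 0 < p) : x ≤ (x ^ 2 * p + p⁻¹) / 2 := by
  have h : 0 ≤ (x * p - 1) ^ 2 / p := by positivity
  have e : (x * p - 1) ^ 2 / p = x ^ 2 * p + p⁻¹ - 2 * x := by field_simp; ring
  linarith

lemma bddAbove_image_Ici_of_integrableOn_deriv_sq_mul_rpow {η : ℝ → ℝ} {K a : ℝ} (hK : 2 < K)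
    (ha : 0 < a) (hd : ∀ t ∈ Ici a, DifferentiableAt ℝ η t)
    (hE : IntegrableOn (fun t => deriv η t ^ 2 * t ^ (K - 1)) (Ioi a)) :
    BddAbove (η '' Ici a) := by
  set φ : ℝ → ℝ := fun t => (deriv η t ^ 2 * t ^ (K - 1) + t ^ (1 - K)) / 2
  have hφ : IntegrableOn φ (Ioi a) :=
    (hE.add (integrableOn_Ioi_rpow_of_lt (by linarith) ha)).div_const 2
  have hφ_nonneg : ∀ t ∈ Ioi a, 0 ≤ φ t := fun t ht => by
    have := (ha.trans ht).le
    positivity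
  refine ⟨η a + ∫ t in Ioi a, φ t, ?_⟩
  rintro _ ⟨b, hb, rfl⟩
  have hFTC : η b - η a ≤ ∫ t in a..b, φ t := by
    refine intervalIntegral.sub_le_integral_of_hasDeriv_right_of_le hb
      (fun t ht => (hd t ht.1).continuousAt.continuousWithinAt)
      (fun t ht => (hd t ht.1.le).hasDerivAt.hasDerivWithinAt)
      ((integrableOn_Icc_iff_integrableOn_Ioc).2 (hφ.mono_set Ioc_subset_Ioi_self))
      fun t ht => ?_
    have ht0 : 0 < t := ha.trans ht.1
    simp only [φ]
    rw [show 1 - K = -(K - 1) by ring, rpow_neg ht0.le]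
    exact le_half_sq_mul_add_inv _ (rpow_pos_of_pos ht0 _)
  have hmono : ∫ t in a..b, φ t ≤ ∫ t in Ioi a, φ t := by
    rw [intervalIntegral.integral_of_le hb]
    exact setIntegral_mono_set hφ ((ae_restrict_iff' measurableSet_Ioi).2
      (Eventually.of_forall hφ_nonneg)) Ioc_subset_Ioi_self.eventuallyLE
  linarith

lemma ContinuousOn.exists_nonpos_forall_pos_Ioc {f : ℝ → ℝ} {a b : ℝ} (hab : a ≤ b)
    (hf : ContinuousOn f (Icc a b)) (ha : f a ≤ 0) (hb : 0 < f b) :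
    ∃ c ∈ Ico a b, f c ≤ 0 ∧ ∀ t ∈ Ioc c b, 0 < f t := by
  set S := Icc a b ∩ f ⁻¹' Iic 0
  have hS : IsClosed S := hf.preimage_isClosed_of_isClosed isClosed_Icc isClosed_Iic
  have hSbdd : BddAbove S := ⟨b, fun t ht => ht.1.2⟩
  have hc : sSup S ∈ S := hS.csSup_mem ⟨a, ⟨le_rfl, hab⟩, ha⟩ hSbdd
  refine ⟨sSup S, ⟨hc.1.1, hc.1.2.lt_of_ne fun h => ?_⟩, hc.2, fun t ht => ?_⟩
  · exact (hb.trans_le (h ▸ hc.2 : f b ≤ 0)).false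
  · by_contra hft
    exact ht.1.not_ge (le_csSup hSbdd ⟨⟨hc.1.1.trans ht.1.le, ht.2⟩, not_lt.1 hft⟩)

lemma ContinuousOn.exists_nonpos_forall_pos_Ico {f : ℝ → ℝ} {a b : ℝ} (hab : a ≤ b)
    (hf : ContinuousOn f (Icc a b)) (ha : 0 < f a) (hb : f b ≤ 0) :
    ∃ c ∈ Ioc a b, f c ≤ 0 ∧ ∀ t ∈ Ico a c, 0 < f t := by
  set S := Icc a b ∩ f ⁻¹' Iic 0
  have hS : IsClosed S := hf.preimage_isClosed_of_isClosed isClosed_Icc isClosed_Iic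
  have hSbdd : BddBelow S := ⟨a, fun t ht => ht.1.1⟩
  have hc : sInf S ∈ S := hS.csInf_mem ⟨b, ⟨hab, le_rfl⟩, hb⟩ hSbdd
  refine ⟨sInf S, ⟨hc.1.1.lt_of_ne fun h => ?_, hc.1.2⟩, hc.2, fun t ht => ?_⟩
  · exact (ha.trans_le (h ▸ hc.2 : f a ≤ 0)).false
  · by_contra hft
    exact ht.2.not_ge (csInf_le hSbdd ⟨⟨ht.1, ht.2.le.trans hc.1.2⟩, not_lt.1 hft⟩)

lemma not_bddAbove_image_Ici_of_le_deriv {f : ℝ → ℝ} {T c : ℝ} (hc : 0 < c)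
    (hd : ∀ t ∈ Ici T, DifferentiableAt ℝ f t) (hf' : ∀ t ∈ Ioi T, c ≤ deriv f t) :
    ¬ BddAbove (f '' Ici T) := by
  rintro ⟨M, hM⟩
  set t := T + (M - f T) / c + 1
  have hMT : 0 ≤ M - f T := sub_nonneg.2 (hM ⟨T, self_mem_Ici, rfl⟩)
  have ht : T ≤ t := by have := div_nonneg hMT hc.le; linarith
  have hgrowth := (convex_Ici T).mul_sub_le_image_sub_of_le_deriv
    (fun s hs => (hd s hs).continuousAt.continuousWithinAt)
    (fun s hs => (hd s (interior_subset hs)).differentiableWithinAt)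
    (by rwa [interior_Ici]) T self_mem_Ici t ht ht
  have e : c * (t - T) = M - f T + c := by simp only [t]; field_simp; ring
  linarith [hM ⟨t, ht, rfl⟩]

namespace SturmRigidity

/-- `Z = -V' / ((K - 2) [K(K-2)]^((K-2)/4))`, which solves the equation with `τ²k² = K - 1`
(`hasDerivAt_rpow_mul_dZ`). -/
def Z (K t : ℝ) : ℝ := t * (1 + t ^ 2) ^ (-(K / 2))

def dZ (K t : ℝ) : ℝ := (1 + t ^ 2) ^ (-(K / 2) - 1) * (1 + (1 - K) * t ^ 2)

/-- The equation reads `(t^(K-1) η')' = odeCoeff K (τ²k²) t * η`, since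
`(2̃* - 1) V^(2̃*-2) = K (K + 2) / (1 + t²)²` (`potential_eq`). -/
def odeCoeff (K μ t : ℝ) : ℝ := (μ - K * (K + 2) * t ^ 2 / (1 + t ^ 2) ^ 2) * t ^ (K - 3)

def wronskian (K : ℝ) (η : ℝ → ℝ) (t : ℝ) : ℝ :=
  t ^ (K - 1) * (deriv η t * Z K t - η t * dZ K t)

section Kernel

variable {K t : ℝ}

lemma Z_pos (ht : 0 < t) : 0 < Z K t := mul_pos ht (rpow_pos_of_pos (by positivity) _)

lemma continuous_Z : Continuous (Z K) :=
  continuous_id.mul <| (continuous_const.add (continuous_pow 2)).rpow_const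
    fun _ => Or.inl (by positivity : (0 : ℝ) < 1 + _).ne'

lemma continuous_dZ : Continuous (dZ K) :=
  ((continuous_const.add (continuous_pow 2)).rpow_const
    fun _ => Or.inl (by positivity : (0 : ℝ) < 1 + _).ne').mul
    (continuous_const.add (continuous_const.mul (continuous_pow 2)))

lemma hasDerivAt_Z (K t : ℝ) : HasDerivAt (Z K) (dZ K t) t := by
  have hw : (0 : ℝ) < 1 + t ^ 2 := by positivity
  refine ((hasDerivAt_id t).mul
    (((hasDerivAt_pow 2 t).const_add 1).rpow_const (p := -(K / 2)) (Or.inl hw.ne'))).congr_deriv ?_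
  rw [dZ, show -(K / 2) = -(K / 2) - 1 + 1 by ring, rpow_add_one hw.ne', add_sub_cancel_right]
  simp only [id_eq, Nat.cast_ofNat]
  ring

lemma rpow_sub_two (ht : 0 < t) (a : ℝ) : t ^ a = t ^ (a - 2) * t ^ 2 := by
  rw [← rpow_natCast, ← rpow_add ht]; norm_num

lemma hasDerivAt_rpow_mul_dZ (ht : 0 < t) :
    HasDerivAt (fun s => s ^ (K - 1) * dZ K s) (odeCoeff K (K - 1) t * Z K t) t := by
  have hw : (0 : ℝ) < 1 + t ^ 2 := by positivity
  refine ((hasDerivAt_rpow_const (p := K - 1) (Or.inl ht.ne')).fun_mul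
    ((((hasDerivAt_pow 2 t).const_add 1).rpow_const (p := -(K / 2) - 1) (Or.inl hw.ne')).fun_mul
      (((hasDerivAt_pow 2 t).const_mul (1 - K)).const_add 1))).congr_deriv ?_
  have e : (1 + t ^ 2) ^ (-(K / 2)) = (1 + t ^ 2) ^ (-(K / 2) - 1 - 1) * (1 + t ^ 2) ^ 2 := by
    rw [rpow_sub_two hw]; ring_nf
  simp only [odeCoeff, Z]
  rw [show K - 1 - 1 = K - 3 + 1 by ring, rpow_add_one ht.ne',
    rpow_sub_two ht (K - 1), show K - 1 - 2 = K - 3 by ring, e,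
    show -(K / 2) - 1 = -(K / 2) - 1 - 1 + 1 by ring, rpow_add_one hw.ne', add_sub_cancel_right]
  field_simp
  ring

end Kernel

section Bounds

variable {K t : ℝ}

lemma one_add_sq_rpow_neg_le (ht : 0 < t) {p : ℝ} (hp : 0 ≤ p) :
    (1 + t ^ 2) ^ (-p) ≤ t ^ (-(2 * p)) := by
  rw [neg_mul_eq_mul_neg, rpow_mul ht.le, rpow_two]
  exact rpow_le_rpow_of_nonpos (by positivity) (by linarith) (by linarith)

lemma rpow_mul_Z_le_one (hK : 0 ≤ K) (ht : 0 < t) : t ^ (K - 1) * Z K t ≤ 1 := by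
  have h := one_add_sq_rpow_neg_le ht (p := K / 2) (by linarith)
  have e : t ^ (K - 1) * t * t ^ (-(2 * (K / 2))) = 1 := by
    rw [← rpow_add_one ht.ne', ← rpow_add ht]; ring_nf; exact rpow_zero t
  calc t ^ (K - 1) * Z K t = t ^ (K - 1) * t * (1 + t ^ 2) ^ (-(K / 2)) := by rw [Z]; ring
    _ ≤ t ^ (K - 1) * t * t ^ (-(2 * (K / 2))) := by gcongr
    _ = 1 := e

lemma neg_rpow_mul_dZ_le (hK : 1 ≤ K) (ht : 0 < t) : -(t ^ (K - 1) * dZ K t) ≤ (K - 1) / t := by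
  have h := one_add_sq_rpow_neg_le ht (p := K / 2 + 1) (by linarith)
  have e : t ^ (K - 1) * t ^ (-(2 * (K / 2 + 1))) * t ^ 2 = t⁻¹ := by
    rw [← rpow_natCast, ← rpow_add ht, ← rpow_add ht, ← rpow_neg_one]; push_cast; ring_nf
  calc -(t ^ (K - 1) * dZ K t)
      = t ^ (K - 1) * (1 + t ^ 2) ^ (-(K / 2 + 1)) * ((K - 1) * t ^ 2 - 1) := by
        rw [dZ, show -(K / 2) - 1 = -(K / 2 + 1) by ring]; ring
    _ ≤ t ^ (K - 1) * (1 + t ^ 2) ^ (-(K / 2 + 1)) * ((K - 1) * t ^ 2) := by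
        gcongr; linarith
    _ ≤ t ^ (K - 1) * t ^ (-(2 * (K / 2 + 1))) * ((K - 1) * t ^ 2) := by
        gcongr
    _ = (K - 1) * (t ^ (K - 1) * t ^ (-(2 * (K / 2 + 1))) * t ^ 2) := by ring
    _ = (K - 1) / t := by rw [e, div_eq_mul_inv]

end Bounds

section Quotient

variable {K a b t : ℝ} {η : ℝ → ℝ}

lemma hasDerivAt_div_Z (ht : 0 < t) (hd : DifferentiableAt ℝ η t) :
    HasDerivAt (fun s => η s / Z K s) (wronskian K η t / (t ^ (K - 1) * Z K t ^ 2)) t := by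
  have hZ := (Z_pos (K := K) ht).ne'
  have hp := (rpow_pos_of_pos ht (K - 1)).ne'
  refine (hd.hasDerivAt.div (hasDerivAt_Z K t) hZ).congr_deriv ?_
  rw [wronskian]
  field_simp

lemma div_Z_lt_div_Z_of_wronskian_pos (ha : 0 < a) (hab : a < b)
    (hd : ∀ t ∈ Icc a b, DifferentiableAt ℝ η t) (hg : ∀ t ∈ Ioo a b, 0 < wronskian K η t) :
    η a / Z K a < η b / Z K b := by
  refine strictMonoOn_of_deriv_pos (convex_Icc a b) (fun t ht =>
    (hasDerivAt_div_Z (ha.trans_le ht.1) (hd t ht)).continuousAt.continuousWithinAt)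
    (fun t ht => ?_) (left_mem_Icc.2 hab.le) (right_mem_Icc.2 hab.le) hab
  rw [interior_Icc] at ht
  have ht0 := ha.trans ht.1
  rw [(hasDerivAt_div_Z ht0 (hd t (Ioo_subset_Icc_self ht))).deriv]
  have := Z_pos (K := K) ht0
  exact div_pos (hg t ht) (by positivity)

lemma div_Z_lt_div_Z_of_wronskian_neg (ha : 0 < a) (hab : a < b)
    (hd : ∀ t ∈ Icc a b, DifferentiableAt ℝ η t) (hg : ∀ t ∈ Ioo a b, wronskian K η t < 0) :
    η b / Z K b < η a / Z K a := by
  refine strictAntiOn_of_deriv_neg (convex_Icc a b) (fun t ht =>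
    (hasDerivAt_div_Z (ha.trans_le ht.1) (hd t ht)).continuousAt.continuousWithinAt)
    (fun t ht => ?_) (left_mem_Icc.2 hab.le) (right_mem_Icc.2 hab.le) hab
  rw [interior_Icc] at ht
  have ht0 := ha.trans ht.1
  rw [(hasDerivAt_div_Z ht0 (hd t (Ioo_subset_Icc_self ht))).deriv]
  have := Z_pos (K := K) ht0
  exact div_neg_of_neg_of_pos (hg t ht) (by positivity)

lemma half_le_deriv_of_le_wronskian {c M : ℝ} (hK : 1 ≤ K) (ht : 0 < t) (hη : 0 < η t)
    (hηM : η t ≤ M) (hc : 0 < c) (hg : c ≤ wronskian K η t) (htM : 2 * (K - 1) * M / c ≤ t) :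
    c / 2 ≤ deriv η t := by
  have hP1 := rpow_mul_Z_le_one (K := K) (by linarith) ht
  have hP0 : 0 < t ^ (K - 1) * Z K t := mul_pos (rpow_pos_of_pos ht _) (Z_pos ht)
  have hMt : (K - 1) * M / t ≤ c / 2 := by
    rw [div_le_iff₀ hc] at htM
    rw [div_le_iff₀ ht]
    linarith
  have hdZ : η t * -(t ^ (K - 1) * dZ K t) ≤ (K - 1) * M / t :=
    calc η t * -(t ^ (K - 1) * dZ K t) ≤ η t * ((K - 1) / t) :=
          mul_le_mul_of_nonneg_left (neg_rpow_mul_dZ_le hK ht) hη.le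
      _ ≤ M * ((K - 1) / t) := mul_le_mul_of_nonneg_right hηM (div_nonneg (by linarith) ht.le)
      _ = (K - 1) * M / t := by ring
  have hPη : c / 2 ≤ t ^ (K - 1) * Z K t * deriv η t := by
    have hw : wronskian K η t =
        t ^ (K - 1) * Z K t * deriv η t + η t * -(t ^ (K - 1) * dZ K t) := by
      rw [wronskian]; ring
    linarith
  have hη' : 0 < deriv η t := pos_of_mul_pos_right (by linarith) hP0.le
  nlinarith

end Quotient

section Wronskian

variable {K μ t : ℝ} {η : ℝ → ℝ}

lemma hasDerivAt_wronskian (ht : 0 < t) (hd : DifferentiableAt ℝ η t)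
    (hF : HasDerivAt (fun s => s ^ (K - 1) * deriv η s) (odeCoeff K μ t * η t) t) :
    HasDerivAt (wronskian K η) ((μ - (K - 1)) * t ^ (K - 3) * η t * Z K t) t := by
  have e : wronskian K η =
      fun s => s ^ (K - 1) * deriv η s * Z K s - η s * (s ^ (K - 1) * dZ K s) := by
    funext s; rw [wronskian]; ring
  rw [e]
  refine ((hF.fun_mul (hasDerivAt_Z K t)).fun_sub
    (hd.hasDerivAt.fun_mul (hasDerivAt_rpow_mul_dZ ht))).congr_deriv ?_
  simp only [odeCoeff]
  ring

lemma continuousOn_wronskian (hf : ContDiffOn ℝ 1 η (Ici 0)) :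
    ContinuousOn (wronskian K η) (Ioi 0) :=
  (continuousOn_id.rpow_const fun _ ht => Or.inl (ne_of_gt ht)).mul
    ((hf.continuousOn_deriv_Ioi.mul continuous_Z.continuousOn).sub
      ((hf.continuousOn.mono Ioi_subset_Ici_self).mul continuous_dZ.continuousOn))

lemma tendsto_wronskian_zero (hK : 1 < K) (hf : ContDiffOn ℝ 1 η (Ici 0)) :
    Tendsto (wronskian K η) (𝓝[>] 0) (𝓝 0) := by
  have hpow : Tendsto (fun s : ℝ => s ^ (K - 1)) (𝓝[>] 0) (𝓝 0) := by
    have := (continuousAt_rpow_const 0 (K - 1) (Or.inr (by linarith))).tendsto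
    rw [zero_rpow (by linarith)] at this
    exact this.mono_left nhdsWithin_le_nhds
  have hη : Tendsto η (𝓝[>] 0) (𝓝 (η 0)) :=
    (hf.continuousOn 0 self_mem_Ici).mono_left (nhdsWithin_mono _ Ioi_subset_Ici_self)
  have h := hpow.mul ((hf.tendsto_deriv_nhdsGT.mul (continuous_Z (K := K)).continuousWithinAt).sub
    (hη.mul (continuous_dZ (K := K)).continuousWithinAt))
  rwa [zero_mul] at h

lemma countable_setOf_odeCoeff_eq_zero (hμ : μ ≠ 0) :
    {t ∈ Ioi (0 : ℝ) | odeCoeff K μ t = 0}.Countable := by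
  open Polynomial in
  set p : ℝ[X] := C μ * (1 + X ^ 2) ^ 2 - C (K * (K + 2)) * X ^ 2
  have hp : p ≠ 0 := fun h => hμ (by simpa [p] using congrArg (eval 0) h)
  refine (finite_setOfPred_isRoot hp).countable.mono fun t ⟨ht, h0⟩ => ?_
  have hw : (1 + t ^ 2) ^ 2 ≠ 0 := by positivity
  have h1 : μ - K * (K + 2) * t ^ 2 / (1 + t ^ 2) ^ 2 = 0 :=
    (mul_eq_zero.1 h0).resolve_right (rpow_pos_of_pos ht _).ne'
  simp only [mem_ofPred_eq, IsRoot, p, eval_sub, eval_mul, eval_C, eval_pow, eval_add, eval_one,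
    eval_X]
  field_simp at h1
  linarith

end Wronskian

structure IsFiniteEnergySolution (K μ : ℝ) (η : ℝ → ℝ) : Prop where
  contDiffOn : ContDiffOn ℝ 1 η (Ici 0)
  apply_zero : η 0 = 0
  integrableOn_energy : IntegrableOn (fun t => deriv η t ^ 2 * t ^ (K - 1)) (Ioi 0)
  deriv_flux : ∀ t ∈ Ioi (0 : ℝ),
    deriv (fun s => s ^ (K - 1) * deriv η s) t = odeCoeff K μ t * η t

namespace IsFiniteEnergySolution

variable {K μ : ℝ} {η : ℝ → ℝ}

lemma neg (h : IsFiniteEnergySolution K μ η) : IsFiniteEnergySolution K μ (fun t => -η t) := by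
  have hd : deriv (fun t => -η t) = fun t => -deriv η t := funext fun _ => deriv.fun_neg
  refine ⟨h.contDiffOn.neg, by simp [h.apply_zero], ?_, fun t ht => ?_⟩
  · simpa [hd] using h.integrableOn_energy
  · simp only [mul_neg, deriv.fun_neg, h.deriv_flux t ht]

lemma hasDerivAt_flux (h : IsFiniteEnergySolution K μ η) {t : ℝ} (ht : 0 < t)
    (hne : odeCoeff K μ t * η t ≠ 0) :
    HasDerivAt (fun s => s ^ (K - 1) * deriv η s) (odeCoeff K μ t * η t) t := by
  -- where the flux is not differentiable, `deriv` is `0`, so the equation forces `odeCoeff * η = 0`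
  rw [← h.deriv_flux t ht]
  refine DifferentiableAt.hasDerivAt (by_contra fun hnd => hne ?_)
  rw [← h.deriv_flux t ht, deriv_zero_of_not_differentiableAt hnd]

lemma wronskian_lt (h : IsFiniteEnergySolution K μ η) (hK : 1 ≤ K) (hμ : K - 1 < μ) {a b : ℝ}
    (ha : 0 < a) (hab : a < b) (hpos : ∀ t ∈ Ioo a b, 0 < η t) :
    wronskian K η a < wronskian K η b := by
  have hcont : ContinuousOn (fun t => (μ - (K - 1)) * t ^ (K - 3) * η t * Z K t) (Icc a b) :=
    ((continuousOn_const.mul (continuousOn_id.rpow_const fun t ht =>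
      Or.inl (ha.trans_le ht.1).ne')).mul (h.contDiffOn.continuousOn.mono fun t ht =>
        (ha.trans_le ht.1).le)).mul continuous_Z.continuousOn
  rw [← sub_pos, ← integral_eq_of_hasDerivAt_off_countable_of_le _ _ hab.le
    (countable_setOf_odeCoeff_eq_zero (K := K) (μ := μ) (by linarith))
    ((continuousOn_wronskian h.contDiffOn).mono fun t ht => ha.trans_le ht.1)
    (fun t ht => ?_) (hcont.intervalIntegrable_of_Icc hab.le)]
  · refine intervalIntegral.intervalIntegral_pos_of_pos_on
      (hcont.intervalIntegrable_of_Icc hab.le) (fun t ht => ?_) hab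
    have ht0 := ha.trans ht.1
    have := hpos t ht
    have := Z_pos (K := K) ht0
    have := rpow_pos_of_pos ht0 (K - 3)
    have : 0 < μ - (K - 1) := by linarith
    positivity
  · obtain ⟨ht, hbad⟩ := ht
    have ht0 := ha.trans ht.1
    have hne : odeCoeff K μ t * η t ≠ 0 :=
      mul_ne_zero (fun h0 => hbad ⟨ht0, h0⟩) (hpos t ht).ne'
    exact hasDerivAt_wronskian ht0 (h.contDiffOn.differentiableAt_of_lt ht0)
      (h.hasDerivAt_flux ht0 hne)

lemma wronskian_pos (h : IsFiniteEnergySolution K μ η) (hK : 1 < K) (hμ : K - 1 < μ) {t₀ : ℝ}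
    (ht₀ : 0 < t₀) (hη : 0 < η t₀) : 0 < wronskian K η t₀ := by
  obtain ⟨α, hα, hηα, hpos⟩ := (h.contDiffOn.continuousOn.mono Icc_subset_Ici_self)
    |>.exists_nonpos_forall_pos_Ioc ht₀.le h.apply_zero.le hη
  have hlt : ∀ {s u}, 0 < s → α ≤ s → s < u → u ≤ t₀ → wronskian K η s < wronskian K η u :=
    fun hs hαs hsu hut => h.wronskian_lt hK.le hμ hs hsu
      fun t ht => hpos t ⟨hαs.trans_lt ht.1, ht.2.le.trans hut⟩
  rcases hα.1.eq_or_lt with rfl | hα0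
  · have hmid : 0 ≤ wronskian K η (t₀ / 2) :=
      le_of_tendsto (tendsto_wronskian_zero (K := K) hK h.contDiffOn) <|
        eventually_of_mem (Ioo_mem_nhdsGT (half_pos ht₀)) fun s hs =>
          (hlt hs.1 hs.1.le hs.2 (half_le_self ht₀.le)).le
    exact hmid.trans_lt (hlt (half_pos ht₀) (half_pos ht₀).le (by linarith) le_rfl)
  · by_contra hg
    have hdecr := div_Z_lt_div_Z_of_wronskian_neg (K := K) hα0 hα.2
      (fun t ht => h.contDiffOn.differentiableAt_of_lt (hα0.trans_le ht.1))
      fun s hs => (hlt (hα0.trans hs.1) hs.1.le hs.2 le_rfl).trans_le (not_lt.1 hg)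
    have h1 : η α / Z K α ≤ 0 := div_nonpos_of_nonpos_of_nonneg hηα (Z_pos hα0).le
    have h2 : 0 < η t₀ / Z K t₀ := div_pos hη (Z_pos ht₀)
    linarith

lemma false_of_forall_pos_of_le_wronskian (h : IsFiniteEnergySolution K μ η) (hK : 2 < K)
    {c t₀ : ℝ} (hc : 0 < c) (ht₀ : 0 < t₀) (hpos : ∀ t ∈ Ici t₀, 0 < η t)
    (hg : ∀ t ∈ Ici t₀, c ≤ wronskian K η t) : False := by
  have hd : ∀ t ∈ Ici t₀, DifferentiableAt ℝ η t := fun t ht =>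
    h.contDiffOn.differentiableAt_of_lt (ht₀.trans_le ht)
  have hbdd := bddAbove_image_Ici_of_integrableOn_deriv_sq_mul_rpow hK ht₀ hd
    (h.integrableOn_energy.mono_set (Ioi_subset_Ioi ht₀.le))
  have ⟨M, hM⟩ := hbdd
  set T := max t₀ (2 * (K - 1) * M / c)
  have hT : t₀ ≤ T := le_max_left _ _
  refine not_bddAbove_image_Ici_of_le_deriv (half_pos hc) (fun t ht => hd t (hT.trans ht))
    (fun t ht => ?_) (hbdd.mono (image_mono (Ici_subset_Ici.2 hT)))
  have ht₀t : t₀ ≤ t := hT.trans (le_of_lt ht)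
  exact half_le_deriv_of_le_wronskian (by linarith) (ht₀.trans_le ht₀t) (hpos t ht₀t)
    (hM ⟨t, ht₀t, rfl⟩) hc (hg t ht₀t) ((le_max_right _ _).trans (le_of_lt ht))

lemma not_pos (h : IsFiniteEnergySolution K μ η) (hK : 2 < K) (hμ : K - 1 < μ) {t₀ : ℝ}
    (ht₀ : 0 < t₀) : ¬ 0 < η t₀ := by
  intro hη
  have hg := h.wronskian_pos (by linarith) hμ ht₀ hη
  have hincr : ∀ {u}, t₀ < u → (∀ t ∈ Ioo t₀ u, 0 < η t) → wronskian K η t₀ < wronskian K η u :=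
    fun hu hpos => h.wronskian_lt (by linarith) hμ ht₀ hu hpos
  by_cases hall : ∀ t ∈ Ici t₀, 0 < η t
  · refine h.false_of_forall_pos_of_le_wronskian hK hg ht₀ hall fun t ht => ?_
    rcases (mem_Ici.1 ht).eq_or_lt with rfl | ht
    · exact le_rfl
    · exact (hincr ht fun s hs => hall s hs.1.le).le
  · push Not at hall
    obtain ⟨b, hb, hηb⟩ := hall
    obtain ⟨β, hβ, hηβ, hpos⟩ := (h.contDiffOn.continuousOn.mono
      (Icc_subset_Ici_iff hb |>.2 ht₀.le)).exists_nonpos_forall_pos_Ico hb hη hηb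
    have hquot := div_Z_lt_div_Z_of_wronskian_pos (K := K) ht₀ hβ.1
      (fun t ht => h.contDiffOn.differentiableAt_of_lt (ht₀.trans_le ht.1))
      fun s hs => hg.trans (hincr hs.1 fun t ht => hpos t ⟨ht.1.le, ht.2.trans hs.2⟩)
    have h1 : η β / Z K β ≤ 0 := div_nonpos_of_nonpos_of_nonneg hηβ (Z_pos (ht₀.trans hβ.1)).le
    have h2 : 0 < η t₀ / Z K t₀ := div_pos hη (Z_pos ht₀)
    linarith

lemma eq_zero (h : IsFiniteEnergySolution K μ η) (hK : 2 < K) (hμ : K - 1 < μ) :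
    ∀ t ∈ Ici (0 : ℝ), η t = 0 := by
  intro t ht
  rcases (mem_Ici.1 ht).eq_or_lt with rfl | ht0
  · exact h.apply_zero
  · have h1 := h.not_pos hK hμ ht0
    have h2 := h.neg.not_pos hK hμ ht0
    push Not at h1 h2
    linarith

end IsFiniteEnergySolution

lemma potential_eq {K : ℝ} (hK : 2 < K) (t : ℝ) :
    (2 * K / (K - 2) - 1) *
      ((K * (K - 2)) ^ ((K - 2) / 4) * (1 + t ^ 2) ^ (-((K - 2) / 2))) ^ (2 * K / (K - 2) - 2)
      = K * (K + 2) / (1 + t ^ 2) ^ 2 := by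
  have hK2 : K - 2 ≠ 0 := by linarith
  have hw : (0 : ℝ) < 1 + t ^ 2 := by positivity
  have hKK : (0 : ℝ) < K * (K - 2) := by nlinarith
  rw [show 2 * K / (K - 2) - 2 = 4 / (K - 2) by field_simp; ring,
    mul_rpow (rpow_nonneg hKK.le _) (rpow_nonneg hw.le _), ← rpow_mul hKK.le, ← rpow_mul hw.le,
    show (K - 2) / 4 * (4 / (K - 2)) = 1 by field_simp, rpow_one,
    show -((K - 2) / 2) * (4 / (K - 2)) = -(2 : ℕ) by field_simp; norm_num, rpow_neg hw.le,
    rpow_natCast]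
  field_simp
  ring

end SturmRigidity

theorem stmt19_general (K τ : ℝ) (hK : 2 < K) (k : ℕ)
    (hkK : K - 1 < τ ^ 2 * (k : ℝ) ^ 2)
    (η : ℝ → ℝ) (hreg : ContDiffOn ℝ 1 η (Set.Ici 0)) (h0 : η 0 = 0)
    (hfin : IntegrableOn (fun t : ℝ => deriv η t ^ 2 * t ^ (K - 1)) (Set.Ioi 0))
    (hode : ∀ t ∈ Set.Ioi (0 : ℝ),
      deriv (fun s : ℝ => s ^ (K - 1) * deriv η s) t
        + (2 * K / (K - 2) - 1) *
          ((K * (K - 2)) ^ ((K - 2) / 4) *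
            (1 + t ^ 2) ^ (-((K - 2) / 2))) ^ (2 * K / (K - 2) - 2) *
          t ^ (K - 1) * η t
        - τ ^ 2 * (k : ℝ) ^ 2 * t ^ (K - 3) * η t = 0) :
    ∀ t ∈ Set.Ici (0 : ℝ), η t = 0 := by
  refine SturmRigidity.IsFiniteEnergySolution.eq_zero ⟨hreg, h0, hfin, fun t ht => ?_⟩ hK hkK
  have h := hode t ht
  rw [SturmRigidity.potential_eq hK, SturmRigidity.rpow_sub_two ht (K - 1),
    show K - 1 - 2 = K - 3 by ring] at h
  rw [SturmRigidity.odeCoeff]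
  field_simp at h ⊢
  linarith

/-- ODE rigidity lemma: for `K > 2`, `τ > 0` and an integer
`k ≥ 1` with `τ²k² > K-1`, any `C¹([0,∞))` solution with finite weighted
Dirichlet energy of the Sturm–Liouville equation
`(t^{K-1}η')' + (2̃*-1)V^{2̃*-2}t^{K-1}η - τ²k²t^{K-3}η = 0` vanishing at `0`
is identically zero. -/
theorem stmt19 (K τ : ℝ) (hK : 2 < K) (hτ : 0 < τ) (k : ℕ) (hk : 1 ≤ k)
    (hkK : K - 1 < τ ^ 2 * (k : ℝ) ^ 2)
    (η : ℝ → ℝ) (hreg : ContDiffOn ℝ 1 η (Set.Ici 0)) (h0 : η 0 = 0)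
    (hfin : IntegrableOn (fun t : ℝ => deriv η t ^ 2 * t ^ (K - 1)) (Set.Ioi 0))
    (hode : ∀ t ∈ Set.Ioi (0 : ℝ),
      deriv (fun s : ℝ => s ^ (K - 1) * deriv η s) t
        + (2 * K / (K - 2) - 1) *
          ((K * (K - 2)) ^ ((K - 2) / 4) *
            (1 + t ^ 2) ^ (-((K - 2) / 2))) ^ (2 * K / (K - 2) - 2) *
          t ^ (K - 1) * η t
        - τ ^ 2 * (k : ℝ) ^ 2 * t ^ (K - 3) * η t = 0) :
    ∀ t ∈ Set.Ici (0 : ℝ), η t = 0 :=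
  stmt19_general K τ hK k hkK η hreg h0 hfin hode

end
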